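/- arXiv:1401.3660 — 2 statements merged into one kernel-verified Lean document; each statement's English description precedes it below -/
import Mathlib

section
/- For every real ρ > 0 and ε with 0 ≤ ε < 1, the series Σ_{u=1}^∞ (ρ^u e^{−ρ}/u!) · [ 1 · ( 2u(1−ε)ε^(u−1)(1 − u(1−ε)ε^(u−1)) + u(1−ε)²ε^(2(u−1)) ) + 2 · u(u−1)(1−ε)²ε^(2(u−1)) ] converges and equals 2ρ(1−ε)e^{−ρ(1−ε)} − ρ(1−ε)²e^{−ρ(1−ε²)}. (This is the closed-form uplink throughput of Slotted Aloha with two receivers.) -/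
/-! Each receiver alone decodes a packet with probability `a = u(1-ε)ε^(u-1)`, and both decode the
same packet with probability `b = u(1-ε)²ε^(2(u-1))`; since `a² = u·b`, the conditional mean of
the number of collected packets collapses to `2a - b`. Averaging `u q^(u-1)` over a Poisson(ρ)
number of users gives `ρ e^{-ρ(1-q)}` (derivative of the generating function `e^{ρ(q-1)}`), which is
applied with `q = ε` and `q = ε²`. -/

open Real

lemma Real.hasSum_pow_div_factorial (x : ℝ) :
    HasSum (fun n : ℕ => x ^ n / n.factorial) (exp x) := by
  simpa only [exp_eq_exp_ℝ] using NormedSpace.expSeries_div_hasSum_exp x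

lemma hasSum_poisson_mul_nat_mul_pow_pred (ρ q : ℝ) :
    HasSum (fun u : ℕ => ρ ^ u * exp (-ρ) / u.factorial * (u * q ^ (u - 1)))
      (ρ * exp (-(ρ * (1 - q)))) := by
  have hexp : ρ * exp (-(ρ * (1 - q))) = ρ * exp (-ρ) * exp (ρ * q) := by
    rw [mul_assoc, ← exp_add]
    ring_nf
  rw [hexp, ← hasSum_nat_add_iff' 1, Finset.sum_range_one]
  simp only [Nat.cast_zero, zero_mul, mul_zero, sub_zero]
  refine ((Real.hasSum_pow_div_factorial (ρ * q)).mul_left (ρ * exp (-ρ))).congr_fun fun n => ?_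
  rw [Nat.factorial_succ, Nat.add_sub_cancel]
  push_cast
  field_simp
  ring

lemma expected_collected_packets_eq (u : ℕ) (ε : ℝ) :
    1 * (2 * (u : ℝ) * (1 - ε) * ε ^ (u - 1) * (1 - (u : ℝ) * (1 - ε) * ε ^ (u - 1)) +
        (u : ℝ) * (1 - ε) ^ 2 * ε ^ (2 * (u - 1))) +
      2 * ((u : ℝ) * ((u : ℝ) - 1) * (1 - ε) ^ 2 * ε ^ (2 * (u - 1))) =
    2 * (1 - ε) * (u * ε ^ (u - 1)) - (1 - ε) ^ 2 * (u * (ε ^ 2) ^ (u - 1)) := by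
  rw [← pow_mul, mul_comm 2 (u - 1), pow_mul]
  ring

theorem slotted_aloha_two_receiver_throughput_general
    (ρ ε : ℝ) :
    HasSum
      (fun u : ℕ =>
        ρ ^ u * Real.exp (-ρ) / (Nat.factorial u) *
          (1 * (2 * (u : ℝ) * (1 - ε) * ε ^ (u - 1) *
                  (1 - (u : ℝ) * (1 - ε) * ε ^ (u - 1)) +
                (u : ℝ) * (1 - ε) ^ 2 * ε ^ (2 * (u - 1))) +
           2 * ((u : ℝ) * ((u : ℝ) - 1) * (1 - ε) ^ 2 * ε ^ (2 * (u - 1)))))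
      (2 * ρ * (1 - ε) * Real.exp (-(ρ * (1 - ε))) -
        ρ * (1 - ε) ^ 2 * Real.exp (-(ρ * (1 - ε ^ 2)))) := by
  have hvalue : 2 * ρ * (1 - ε) * exp (-(ρ * (1 - ε))) - ρ * (1 - ε) ^ 2 * exp (-(ρ * (1 - ε ^ 2))) =
      2 * (1 - ε) * (ρ * exp (-(ρ * (1 - ε)))) -
        (1 - ε) ^ 2 * (ρ * exp (-(ρ * (1 - ε ^ 2)))) := by
    ring
  rw [hvalue]
  refine (((hasSum_poisson_mul_nat_mul_pow_pred ρ ε).mul_left (2 * (1 - ε))).sub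
    ((hasSum_poisson_mul_nat_mul_pow_pred ρ (ε ^ 2)).mul_left ((1 - ε) ^ 2))).congr_fun fun u => ?_
  rw [expected_collected_packets_eq]
  ring

/-- Closed-form uplink throughput of Slotted Aloha with two receivers:
`Σ_{u≥1} Pr{U=u} · (1·Pr{C=1|u} + 2·Pr{C=2|u}) = 2ρ(1-ε)e^{-ρ(1-ε)} - ρ(1-ε)²e^{-ρ(1-ε²)}`.
(The `u = 0` term is zero due to the factors `u`.) -/
theorem slotted_aloha_two_receiver_throughput
    (ρ ε : ℝ) (hρ : 0 < ρ) (hε0 : 0 ≤ ε) (hε1 : ε < 1) :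
    HasSum
      (fun u : ℕ =>
        ρ ^ u * Real.exp (-ρ) / (Nat.factorial u) *
          (1 * (2 * (u : ℝ) * (1 - ε) * ε ^ (u - 1) *
                  (1 - (u : ℝ) * (1 - ε) * ε ^ (u - 1)) +
                (u : ℝ) * (1 - ε) ^ 2 * ε ^ (2 * (u - 1))) +
           2 * ((u : ℝ) * ((u : ℝ) - 1) * (1 - ε) ^ 2 * ε ^ (2 * (u - 1)))))
      (2 * ρ * (1 - ε) * Real.exp (-(ρ * (1 - ε))) -
        ρ * (1 - ε) ^ 2 * Real.exp (-(ρ * (1 - ε ^ 2)))) :=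
  slotted_aloha_two_receiver_throughput_general ρ ε
end

section
/- For every integer K ≥ 1, every real ρ > 0, and every ε with 0 ≤ ε < 1, Σ_{u=1}^∞ (ρ^u e^{−ρ}/u!) · Σ_{k=1}^K (−1)^(k−1) · C(K,k) · u · ((1−ε)ε^(u−1))^k = Σ_{k=1}^K (−1)^(k−1) · C(K,k) · ρ(1−ε)^k e^{−ρ(1−ε^k)}, where C(K,k) is the binomial coefficient. (Proposition 1: the uplink throughput of Slotted Aloha with K receivers equals Σ_{k=1}^K (−1)^(k−1) C(K,k) ρ(1−ε)^k e^{−ρ(1−ε^k)}.) -/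
/-!
Conditioned on `U = u`, the `k`-th inclusion–exclusion term is `u (1-ε)^k (ε^k)^(u-1)`.
Its Poisson average is a differentiated exponential series:
`Σ_u ρ^u/u! · u c^(u-1) = ρ e^{ρc}`, so with `c = ε^k` it equals `ρ (1-ε)^k e^{-ρ(1-ε^k)}`.
The finite sum over `k` then commutes with the series.
-/

open Finset

theorem hasSum_pow_div_factorial_mul_natCast_mul_pow_pred (ρ c : ℝ) :
    HasSum (fun u : ℕ => ρ ^ u / u.factorial * (u * c ^ (u - 1))) (ρ * Real.exp (ρ * c)) := by
  have hexp : HasSum (fun n : ℕ => ρ * ((ρ * c) ^ n / n.factorial)) (ρ * Real.exp (ρ * c)) := by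
    rw [Real.exp_eq_exp_ℝ]
    exact (NormedSpace.expSeries_div_hasSum_exp (ρ * c)).mul_left ρ
  -- the `u = 0` term vanishes, and the term at `u = n + 1` is `ρ (ρc)^n / n!`
  refine (hasSum_nat_add_iff' 1).mp ?_
  simp only [range_one, sum_singleton, CharP.cast_eq_zero, zero_mul, mul_zero, sub_zero]
  refine hexp.congr_fun fun n => ?_
  rw [Nat.factorial_succ, Nat.add_sub_cancel]
  push_cast
  field_simp
  ring

theorem hasSum_poisson_mul_inclusionExclusionTerm (ρ ε : ℝ) (k : ℕ) :
    HasSum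
      (fun u : ℕ =>
        ρ ^ u * Real.exp (-ρ) / u.factorial * ((u : ℝ) * ((1 - ε) * ε ^ (u - 1)) ^ k))
      (ρ * (1 - ε) ^ k * Real.exp (-(ρ * (1 - ε ^ k)))) := by
  have hseries := (hasSum_pow_div_factorial_mul_natCast_mul_pow_pred ρ (ε ^ k)).mul_left
    (Real.exp (-ρ) * (1 - ε) ^ k)
  have hexp : Real.exp (-ρ) * Real.exp (ρ * ε ^ k) = Real.exp (-(ρ * (1 - ε ^ k))) := by
    rw [← Real.exp_add]
    ring_nf
  rw [← hexp, show ρ * (1 - ε) ^ k * (Real.exp (-ρ) * Real.exp (ρ * ε ^ k))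
      = Real.exp (-ρ) * (1 - ε) ^ k * (ρ * Real.exp (ρ * ε ^ k)) by ring]
  refine hseries.congr_fun fun u => ?_
  rw [mul_pow, ← pow_mul, ← pow_mul, mul_comm (u - 1) k]
  ring

theorem slotted_aloha_K_receiver_throughput_general
    (K : ℕ) (ρ ε : ℝ) :
    HasSum
      (fun u : ℕ =>
        ρ ^ u * Real.exp (-ρ) / (Nat.factorial u) *
          ∑ k ∈ Finset.Icc 1 K,
            (-1 : ℝ) ^ (k - 1) * (K.choose k) * ((u : ℝ) * ((1 - ε) * ε ^ (u - 1)) ^ k))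
      (∑ k ∈ Finset.Icc 1 K,
        (-1 : ℝ) ^ (k - 1) * (K.choose k) * (ρ * (1 - ε) ^ k * Real.exp (-(ρ * (1 - ε ^ k))))) := by
  have hterm (k : ℕ) := (hasSum_poisson_mul_inclusionExclusionTerm ρ ε k).mul_left
    ((-1 : ℝ) ^ (k - 1) * K.choose k)
  refine (hasSum_sum fun k _ => hterm k).congr_fun fun u => ?_
  rw [mul_sum]
  exact sum_congr rfl fun k _ => by ring

/-- Proposition 1: the uplink throughput of Slotted Aloha with `K` receivers.
The Poisson average of the conditional expected number of collected packets
(given by inclusion–exclusion) equals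
`Σ_{k=1}^K (-1)^(k-1) C(K,k) ρ(1-ε)^k e^{-ρ(1-ε^k)}`. -/
theorem slotted_aloha_K_receiver_throughput
    (K : ℕ) (hK : 1 ≤ K) (ρ ε : ℝ) (hρ : 0 < ρ) (hε0 : 0 ≤ ε) (hε1 : ε < 1) :
    HasSum
      (fun u : ℕ =>
        ρ ^ u * Real.exp (-ρ) / (Nat.factorial u) *
          ∑ k ∈ Finset.Icc 1 K,
            (-1 : ℝ) ^ (k - 1) * (K.choose k) * ((u : ℝ) * ((1 - ε) * ε ^ (u - 1)) ^ k))
      (∑ k ∈ Finset.Icc 1 K,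
        (-1 : ℝ) ^ (k - 1) * (K.choose k) * (ρ * (1 - ε) ^ k * Real.exp (-(ρ * (1 - ε ^ k))))) :=
  slotted_aloha_K_receiver_throughput_general K ρ ε
end
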